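/- arXiv:1409.3821 — 3 statements merged into one kernel-verified Lean document; each statement's English description precedes it below -/
import Mathlib

section
/- For the exponential family p_θ on {0,1}^p with strictly positive weight h, the covariance matrix satisfies Cov_θ(X) ⪰ c(θ)·I for a strictly positive constant c(θ) that can be taken to be min_{x∈{0,1}^p} p_θ(x)^2. -/
open Finset

/-- Value of a Boolean coordinate as a real number. -/
noncomputable def bval (b : Bool) : ℝ := if b then 1 else 0

/-- Scalar product `⟨θ, x⟩` for `x ∈ {0,1}^p`. -/
noncomputable def ip {p : ℕ} (θ : Fin p → ℝ) (x : Fin p → Bool) : ℝ :=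
  ∑ i, θ i * bval (x i)

/-- Partition function `Z(θ)`. -/
noncomputable def Zfun {p : ℕ} (h : (Fin p → Bool) → ℝ) (θ : Fin p → ℝ) : ℝ :=
  ∑ x : Fin p → Bool, h x * Real.exp (ip θ x)

/-- Log-partition function `A(θ)`. -/
noncomputable def Afun {p : ℕ} (h : (Fin p → Bool) → ℝ) (θ : Fin p → ℝ) : ℝ :=
  Real.log (Zfun h θ)

/-- Density `p_θ(x)` of the exponential family. -/
noncomputable def pdens {p : ℕ} (h : (Fin p → Bool) → ℝ) (θ : Fin p → ℝ)
    (x : Fin p → Bool) : ℝ :=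
  h x * Real.exp (ip θ x) / Zfun h θ

/-- Mean `τ_*(θ)_i = E_θ[X_i]`. -/
noncomputable def meanMap {p : ℕ} (h : (Fin p → Bool) → ℝ) (θ : Fin p → ℝ) (i : Fin p) : ℝ :=
  ∑ x : Fin p → Bool, bval (x i) * pdens h θ x

/-- Value of the linear functional `⟨v, x⟩` for `x ∈ {0,1}^p`. -/
noncomputable def ipv {p : ℕ} (v : Fin p → ℝ) (x : Fin p → Bool) : ℝ :=
  ∑ i, v i * bval (x i)

lemma bval_not (b : Bool) : bval (!b) = 1 - bval b := by cases b <;> simp [bval]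

lemma bval_sq (b : Bool) : bval b * bval b = bval b := by cases b <;> simp [bval]

lemma flip_invol {p : ℕ} (i : Fin p) :
    Function.Involutive (fun x : Fin p → Bool => Function.update x i (!(x i))) := by
  intro x
  funext j
  by_cases hj : j = i <;> simp [Function.update, hj]

lemma flip_sum {p : ℕ} (i : Fin p) (F : (Fin p → Bool) → ℝ) :
    ∑ x : Fin p → Bool, F (Function.update x i (!(x i))) = ∑ x : Fin p → Bool, F x :=
  Equiv.sum_comp ((flip_invol i).toPerm _) F

lemma sum_bval {p : ℕ} (i : Fin p) :
    ∑ x : Fin p → Bool, bval (x i) = 2 ^ p / 2 := by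
  have h1 : ∑ x : Fin p → Bool, bval (x i)
      = ∑ x : Fin p → Bool, (1 - bval (x i)) := by
    rw [← flip_sum i (fun x => bval (x i))]
    simp [bval_not]
  have h2 : ∑ x : Fin p → Bool, (1 - bval (x i))
      = (2:ℝ)^p - ∑ x : Fin p → Bool, bval (x i) := by
    rw [Finset.sum_sub_distrib, Finset.sum_const, card_univ]
    simp [Fintype.card_fun]
  linarith [h1, h2]

lemma sum_bval_mul {p : ℕ} (i j : Fin p) (hij : i ≠ j) :
    ∑ x : Fin p → Bool, bval (x i) * bval (x j) = 2 ^ p / 4 := by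
  have key : ∀ x : Fin p → Bool,
      bval (Function.update x i (!(x i)) i) * bval (Function.update x i (!(x i)) j)
      = (1 - bval (x i)) * bval (x j) := by
    intro x
    rw [Function.update_self, Function.update_of_ne (Ne.symm hij), bval_not]
  have h1 : ∑ x : Fin p → Bool, bval (x i) * bval (x j)
      = ∑ x : Fin p → Bool, (1 - bval (x i)) * bval (x j) := by
    rw [← flip_sum i (fun x => bval (x i) * bval (x j))]
    exact Finset.sum_congr rfl fun x _ => key x
  have h2 : ∑ x : Fin p → Bool, (1 - bval (x i)) * bval (x j)
      = (2:ℝ)^p/2 - ∑ x : Fin p → Bool, bval (x i) * bval (x j) := by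
    have : ∀ x : Fin p → Bool, (1 - bval (x i)) * bval (x j)
        = bval (x j) - bval (x i) * bval (x j) := by intro x; ring
    rw [Finset.sum_congr rfl fun x _ => this x, Finset.sum_sub_distrib, sum_bval j]
  linarith [h1, h2]

lemma sum_ipv {p : ℕ} (v : Fin p → ℝ) :
    ∑ x : Fin p → Bool, ipv v x = 2 ^ p / 2 * ∑ i, v i := by
  unfold ipv
  rw [Finset.sum_comm, Finset.mul_sum]
  refine Finset.sum_congr rfl fun i _ => ?_
  rw [← Finset.mul_sum, sum_bval]
  ring

lemma sum_ipv_sq {p : ℕ} (v : Fin p → ℝ) :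
    ∑ x : Fin p → Bool, ipv v x ^ 2
      = 2 ^ p / 4 * ((∑ i, v i) ^ 2 + ∑ i, v i ^ 2) := by
  have expand : ∀ x : Fin p → Bool, ipv v x ^ 2
      = ∑ i, ∑ j, v i * v j * (bval (x i) * bval (x j)) := by
    intro x
    rw [sq, ipv, Finset.sum_mul_sum]
    exact Finset.sum_congr rfl fun i _ => Finset.sum_congr rfl fun j _ => by ring
  calc ∑ x : Fin p → Bool, ipv v x ^ 2
      = ∑ i, ∑ j, ∑ x : Fin p → Bool, v i * v j * (bval (x i) * bval (x j)) := by
        rw [Finset.sum_congr rfl fun x _ => expand x, Finset.sum_comm]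
        exact Finset.sum_congr rfl fun i _ => Finset.sum_comm
    _ = ∑ i, ∑ j, v i * v j * ((2:ℝ)^p/4 + if i = j then (2:ℝ)^p/4 else 0) := by
        refine Finset.sum_congr rfl fun i _ => Finset.sum_congr rfl fun j _ => ?_
        rw [← Finset.mul_sum]
        by_cases hij : i = j
        · subst hij
          simp only [if_pos rfl]
          rw [Finset.sum_congr rfl fun x _ => bval_sq (x i), sum_bval]
          rw [if_pos trivial]
          ring
        · rw [sum_bval_mul i j hij, if_neg hij]
          ring
    _ = 2 ^ p / 4 * ((∑ i, v i) ^ 2 + ∑ i, v i ^ 2) := by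
        have : ∀ i : Fin p, ∑ j, v i * v j * ((2:ℝ)^p/4 + if i = j then (2:ℝ)^p/4 else 0)
            = (2:ℝ)^p/4 * (v i * ∑ j, v j) + (2:ℝ)^p/4 * v i ^ 2 := by
          intro i
          rw [Finset.sum_congr rfl (fun j _ => by
            rw [mul_add, mul_ite, mul_zero] : ∀ j ∈ univ,
              v i * v j * ((2:ℝ)^p/4 + if i = j then (2:ℝ)^p/4 else 0)
              = v i * v j * ((2:ℝ)^p/4) + if i = j then v i * v j * ((2:ℝ)^p/4) else 0)]
          rw [Finset.sum_add_distrib, Finset.sum_ite_eq univ i (fun j => v i * v j * ((2:ℝ)^p/4)),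
            if_pos (mem_univ i)]
          have e2 : ∑ j : Fin p, v i * v j * ((2:ℝ)^p/4) = (2:ℝ)^p/4 * (v i * ∑ j, v j) := by
            rw [Finset.mul_sum, Finset.mul_sum]
            exact Finset.sum_congr rfl fun j _ => by ring
          rw [e2]
          ring
        rw [Finset.sum_congr rfl fun i _ => this i, Finset.sum_add_distrib,
          ← Finset.mul_sum, ← Finset.mul_sum, ← Finset.sum_mul, sq (∑ i, v i)]
        ring

/-- The covariance matrix satisfies `Cov_θ(X) ⪰ c(θ)·I` with
`c(θ) = min_{x∈{0,1}^p} p_θ(x)²`: for every unit vector `v`,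
`Var_θ(⟨v,X⟩) ≥ min_x p_θ(x)²`. -/
theorem cov_lowerBound {p : ℕ} (hp : 1 ≤ p)
    (h : (Fin p → Bool) → ℝ) (hpos : ∀ x, 0 < h x) (θ : Fin p → ℝ)
    (v : Fin p → ℝ) (hv : ∑ i, v i ^ 2 = 1) :
    (Finset.univ.inf' Finset.univ_nonempty fun x : Fin p → Bool => pdens h θ x ^ 2) ≤
      ∑ x : Fin p → Bool,
        pdens h θ x * (ipv v x - ∑ y : Fin p → Bool, pdens h θ y * ipv v y) ^ 2 := by

  set f := ipv v with hf
  set s := ∑ i, v i with hs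
  have hSf : ∑ x : Fin p → Bool, f x = 2 ^ p / 2 * s := sum_ipv v
  have hSf2 : ∑ x : Fin p → Bool, f x ^ 2 = 2 ^ p / 4 * (s ^ 2 + 1) := by
    rw [hf, sum_ipv_sq v, hv, hs]
  set P := pdens h θ with hP
  have hZ : 0 < Zfun h θ :=
    Finset.sum_pos (fun x _ => mul_pos (hpos x) (Real.exp_pos _)) univ_nonempty
  have hPpos : ∀ x, 0 < P x := fun x => div_pos (mul_pos (hpos x) (Real.exp_pos _)) hZ
  have hPsum : ∑ x : Fin p → Bool, P x = 1 := by
    rw [hP]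
    unfold pdens
    rw [← Finset.sum_div]
    exact div_self hZ.ne'
  set m := Finset.univ.inf' Finset.univ_nonempty P with hm
  have hmle : ∀ x, m ≤ P x := fun x => Finset.inf'_le _ (mem_univ x)
  obtain ⟨x₀, -, hx₀⟩ := Finset.exists_mem_eq_inf' (Finset.univ_nonempty) P
  have hmpos : 0 < m := by rw [hm, hx₀]; exact hPpos x₀
  have h2p : (2:ℝ) ≤ 2 ^ p := by
    calc (2:ℝ) = 2 ^ 1 := by norm_num
    _ ≤ 2 ^ p := by exact pow_le_pow_right₀ (by norm_num) hp
  have hcard : m * 2 ^ p ≤ 1 := by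
    have : ∑ _x : Fin p → Bool, m ≤ ∑ x : Fin p → Bool, P x :=
      Finset.sum_le_sum fun x _ => hmle x
    rw [hPsum, Finset.sum_const, card_univ] at this
    simpa [Fintype.card_fun, mul_comm] using this
  set μ := ∑ y : Fin p → Bool, P y * f y with hμ
  have expand : ∑ x : Fin p → Bool, (f x - μ) ^ 2
      = (∑ x : Fin p → Bool, f x ^ 2) - 2 * μ * (∑ x : Fin p → Bool, f x)
        + 2 ^ p * μ ^ 2 := by
    have e1 : ∀ x : Fin p → Bool, (f x - μ) ^ 2 = f x ^ 2 - 2 * μ * f x + μ ^ 2 := by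
      intro x; ring
    rw [Finset.sum_congr rfl fun x _ => e1 x, Finset.sum_add_distrib,
      Finset.sum_sub_distrib, ← Finset.mul_sum, Finset.sum_const, card_univ,
      nsmul_eq_mul]
    simp [Fintype.card_fun]
  have hquad : 2 ^ p / 4 ≤ ∑ x : Fin p → Bool, (f x - μ) ^ 2 := by
    rw [expand, hSf, hSf2]
    nlinarith [sq_nonneg (s - 2 * μ), h2p]
  calc (Finset.univ.inf' Finset.univ_nonempty fun x : Fin p → Bool => P x ^ 2)
      ≤ P x₀ ^ 2 := Finset.inf'_le _ (mem_univ x₀)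
    _ = m * m := by rw [hm, ← hx₀]; ring
    _ ≤ m * (2 ^ p / 4) := by
        have h12 : m * 2 ≤ m * 2 ^ p := mul_le_mul_of_nonneg_left h2p hmpos.le
        have : m ≤ 2 ^ p / 4 := by linarith
        exact mul_le_mul_of_nonneg_left this hmpos.le
    _ ≤ m * ∑ x : Fin p → Bool, (f x - μ) ^ 2 :=
        mul_le_mul_of_nonneg_left hquad hmpos.le
    _ ≤ ∑ x : Fin p → Bool, P x * (f x - μ) ^ 2 := by
        rw [Finset.mul_sum]
        exact Finset.sum_le_sum fun x _ =>
          mul_le_mul_of_nonneg_right (hmle x) (sq_nonneg _)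
end

section
/- The mean map τ_* : ℝ^p → (0,1)^p of an exponential family on {0,1}^p with strictly positive weight h is injective. -/
open Finset

/-- Chebyshev-type double-sum identity for the covariance of `s` and `exp ∘ s`. -/
lemma cheb_identity {α : Type*} [Fintype α] (a s : α → ℝ) :
    ∑ x : α, ∑ y : α, a x * a y * (s x - s y) * (Real.exp (s x) - Real.exp (s y)) =
      2 * ((∑ x : α, s x * a x * Real.exp (s x)) * (∑ x : α, a x)
        - (∑ x : α, s x * a x) * (∑ x : α, a x * Real.exp (s x))) := by
  have e : ∀ x y : α, a x * a y * (s x - s y) * (Real.exp (s x) - Real.exp (s y)) =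
      (s x * a x * Real.exp (s x)) * (a y) - (s x * a x) * (a y * Real.exp (s y))
      - (a x * Real.exp (s x)) * (s y * a y) + (a x) * (s y * a y * Real.exp (s y)) := by
    intro x y; ring
  simp_rw [e]
  simp_rw [Finset.sum_add_distrib, Finset.sum_sub_distrib, ← Finset.mul_sum, ← Finset.sum_mul]
  ring

lemma mul_exp_sub_one_eq_zero {t : ℝ} (ht : t * (Real.exp t - 1) = 0) : t = 0 := by
  rcases lt_trichotomy t 0 with h | h | h
  · exfalso
    have h1 : Real.exp t < 1 := by
      calc Real.exp t < Real.exp 0 := Real.exp_lt_exp.mpr h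
      _ = 1 := Real.exp_zero
    nlinarith
  · exact h
  · exfalso
    have h1 : 1 < Real.exp t := by
      calc (1:ℝ) = Real.exp 0 := Real.exp_zero.symm
      _ < Real.exp t := Real.exp_lt_exp.mpr h
    nlinarith

/-- The mean map `τ_* : ℝ^p → (0,1)^p` of an exponential family with strictly positive
weight `h` is injective. -/
theorem meanMap_injective {p : ℕ} (hp : 1 ≤ p)
    (h : (Fin p → Bool) → ℝ) (hpos : ∀ x, 0 < h x) :
    Function.Injective (meanMap h) := by
  intro θ₁ θ₂ heq
  set d : Fin p → ℝ := fun i => θ₁ i - θ₂ i with hd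
  set a : (Fin p → Bool) → ℝ := fun x => h x * Real.exp (ip θ₂ x) with ha
  set s : (Fin p → Bool) → ℝ := fun x => ip d x with hs
  have hapos : ∀ x, 0 < a x := fun x => mul_pos (hpos x) (Real.exp_pos _)
  have hsip : ∀ θ x, (∑ i, (fun i => θ i - θ₂ i) i * bval (x i)) = ip θ x - ip θ₂ x := by
    intro θ x
    simp only [ip, sub_mul, Finset.sum_sub_distrib]
  have hip1 : ∀ x, ip θ₁ x = ip θ₂ x + s x := by
    intro x
    have := hsip θ₁ x
    simp only [hs, hd, ip] at *
    linarith [this]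
  have he1 : ∀ x, h x * Real.exp (ip θ₁ x) = a x * Real.exp (s x) := by
    intro x
    rw [hip1 x, Real.exp_add, ha]
    ring
  have hZ2 : Zfun h θ₂ = ∑ x : Fin p → Bool, a x := rfl
  have hZ1 : Zfun h θ₁ = ∑ x : Fin p → Bool, a x * Real.exp (s x) := by
    simp only [Zfun]; exact Finset.sum_congr rfl fun x _ => he1 x
  have hZ1pos : 0 < Zfun h θ₁ := by
    rw [hZ1]
    exact Finset.sum_pos (fun x _ => mul_pos (hapos x) (Real.exp_pos _)) Finset.univ_nonempty
  have hZ2pos : 0 < Zfun h θ₂ := by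
    rw [hZ2]
    exact Finset.sum_pos (fun x _ => hapos x) Finset.univ_nonempty
  -- the dotted mean identity
  have hdot : ∀ θ : Fin p → ℝ, ∑ i, d i * meanMap h θ i
      = ∑ x : Fin p → Bool, s x * pdens h θ x := by
    intro θ
    simp only [meanMap, Finset.mul_sum]
    rw [Finset.sum_comm]
    refine Finset.sum_congr rfl fun x _ => ?_
    simp only [hs, ip, Finset.sum_mul]
    exact Finset.sum_congr rfl fun i _ => by ring
  have hdot1 : ∑ x : Fin p → Bool, s x * pdens h θ₁ x
      = (∑ x : Fin p → Bool, s x * a x * Real.exp (s x)) / Zfun h θ₁ := by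
    rw [Finset.sum_div]
    refine Finset.sum_congr rfl fun x _ => ?_
    rw [pdens, he1 x]; ring
  have hdot2 : ∑ x : Fin p → Bool, s x * pdens h θ₂ x
      = (∑ x : Fin p → Bool, s x * a x) / Zfun h θ₂ := by
    rw [Finset.sum_div]
    refine Finset.sum_congr rfl fun x _ => ?_
    rw [pdens, ha]; ring
  have hkey : (∑ x : Fin p → Bool, s x * a x * Real.exp (s x)) * (∑ x : Fin p → Bool, a x)
      = (∑ x : Fin p → Bool, s x * a x) * (∑ x : Fin p → Bool, a x * Real.exp (s x)) := by
    have e1 : ∑ i, d i * meanMap h θ₁ i = ∑ i, d i * meanMap h θ₂ i := by rw [heq]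
    rw [hdot θ₁, hdot θ₂, hdot1, hdot2] at e1
    rw [div_eq_div_iff (ne_of_gt hZ1pos) (ne_of_gt hZ2pos)] at e1
    rw [← hZ1, ← hZ2]
    linarith [e1]
  have hzero : ∑ x : Fin p → Bool, ∑ y : Fin p → Bool,
      a x * a y * (s x - s y) * (Real.exp (s x) - Real.exp (s y)) = 0 := by
    rw [cheb_identity a s]
    rw [hkey]; ring
  have hnn : ∀ x y : Fin p → Bool,
      0 ≤ a x * a y * (s x - s y) * (Real.exp (s x) - Real.exp (s y)) := by
    intro x y
    rcases le_total (s y) (s x) with hle | hle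
    · have h1 : 0 ≤ s x - s y := by linarith
      have h2 : 0 ≤ Real.exp (s x) - Real.exp (s y) := by
        have := Real.exp_le_exp.mpr hle; linarith
      have hax : 0 ≤ a x * a y := le_of_lt (mul_pos (hapos x) (hapos y))
      exact mul_nonneg (mul_nonneg hax h1) h2
    · have h1 : s x - s y ≤ 0 := by linarith
      have h2 : Real.exp (s x) - Real.exp (s y) ≤ 0 := by
        have := Real.exp_le_exp.mpr hle; linarith
      have hax : 0 < a x * a y := mul_pos (hapos x) (hapos y)
      nlinarith [mul_nonneg (neg_nonneg.mpr h1) (neg_nonneg.mpr h2)]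
  have hterm : ∀ x y : Fin p → Bool,
      a x * a y * (s x - s y) * (Real.exp (s x) - Real.exp (s y)) = 0 := by
    have h1 := (Finset.sum_eq_zero_iff_of_nonneg
      (fun x _ => Finset.sum_nonneg fun y _ => hnn x y)).mp hzero
    intro x y
    have h2 := (Finset.sum_eq_zero_iff_of_nonneg (fun y _ => hnn x y)).mp
      (h1 x (Finset.mem_univ x))
    exact h2 y (Finset.mem_univ y)
  -- extract d i = 0
  have hdzero : ∀ i, d i = 0 := by
    intro i
    set xi : Fin p → Bool := fun j => decide (j = i) with hxi
    set y0 : Fin p → Bool := fun _ => false with hy0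
    have hsy0 : s y0 = 0 := by
      simp [hs, ip, hy0, bval]
    have hsxi : s xi = d i := by
      simp only [hs, ip, hxi, bval]
      rw [Finset.sum_eq_single i]
      · simp
      · intro j _ hj; simp [hj]
      · intro hi; exact absurd (Finset.mem_univ i) hi
    have := hterm xi y0
    rw [hsxi, hsy0, Real.exp_zero] at this
    have hab : 0 < a xi * a y0 := mul_pos (hapos xi) (hapos y0)
    have : d i * (Real.exp (d i) - 1) = 0 := by
      by_contra hne
      apply hne
      have h3 : a xi * a y0 * (d i - 0) * (Real.exp (d i) - 1) = 0 := this
      have h4 : (a xi * a y0) * (d i * (Real.exp (d i) - 1)) = 0 := by linarith [h3]; 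
      rcases mul_eq_zero.mp h4 with h5 | h5
      · exact absurd h5 (ne_of_gt hab)
      · exact h5
    have := mul_exp_sub_one_eq_zero this
    exact this
  funext i
  have := hdzero i
  simp only [hd] at this
  linarith
end

section
/- The mean map τ_* : ℝ^p → (0,1)^p of an exponential family on {0,1}^p with strictly positive weight h is a bijection onto the open cube (0,1)^p. -/
open Finset

/-!
Strict Jensen for `exp` gives `A θ' - A θ > ⟨τ_*(θ), θ' - θ⟩` for `θ ≠ θ'`, where `A = log Z`;
adding this to the same inequality with `θ, θ'` swapped shows `τ_*(θ) ≠ τ_*(θ')`.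
For `τ ∈ (0,1)^p`, taking `x_i = [θ_i > 0]` in `Z` shows that `A θ - ⟨θ, τ⟩` grows at least like
`min(τ_i, 1 - τ_i) |θ_i|` in every coordinate, so it attains a minimum. Along a coordinate line
`A (θ + t e_i) = A θ + log (1 + τ_*(θ)_i (e^t - 1))`, and stationarity at `t = 0` gives
`τ_*(θ)_i = τ_i`.
-/

open Filter

lemma exp_mul_bval (t : ℝ) (b : Bool) : Real.exp (t * bval b) = 1 + bval b * (Real.exp t - 1) := by
  cases b <;> simp [bval]

lemma min_mul_abs_le_mul_bval_sub (s τ : ℝ) :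
    min τ (1 - τ) * |s| ≤ s * (bval (decide (0 < s)) - τ) := by
  rcases lt_or_ge 0 s with hs | hs
  · simp only [hs, decide_true, bval, if_true, abs_of_pos hs]
    nlinarith [min_le_right τ (1 - τ)]
  · simp only [hs.not_gt, decide_false, bval, Bool.false_eq_true, if_false, abs_of_nonpos hs]
    nlinarith [min_le_left τ (1 - τ)]

lemma eq_of_forall_mul_le_log_one_add (μ τ : ℝ)
    (H : ∀ t, t * τ ≤ Real.log (1 + μ * (Real.exp t - 1))) : μ = τ := by
  have hmin : IsLocalMin (fun t => Real.log (1 + μ * (Real.exp t - 1)) - t * τ) 0 :=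
    Eventually.of_forall fun t => by simpa using H t
  have hderiv : HasDerivAt (fun t => Real.log (1 + μ * (Real.exp t - 1)) - t * τ) (μ - τ) 0 := by
    have := ((((Real.hasDerivAt_exp 0).sub_const 1).const_mul μ).const_add 1).log (by simp)
    simpa using this.fun_sub (hasDerivAt_mul_const τ)
  linarith [hmin.hasDerivAt_eq_zero hderiv]

section

variable {p : ℕ}

lemma ip_eq_dotProduct (θ : Fin p → ℝ) (x : Fin p → Bool) : ip θ x = θ ⬝ᵥ (bval ∘ x) := rfl

lemma ip_sub (θ θ' : Fin p → ℝ) (x : Fin p → Bool) : ip (θ - θ') x = ip θ x - ip θ' x := by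
  simp only [ip_eq_dotProduct, sub_dotProduct]

lemma ip_smul_single (t : ℝ) (i : Fin p) (x : Fin p → Bool) :
    ip (t • Pi.single i 1) x = t * bval (x i) := by
  simp [ip_eq_dotProduct, smul_dotProduct, single_dotProduct]

lemma ip_false (θ : Fin p → ℝ) : ip θ (fun _ => false) = 0 := by
  simp [ip, bval]

lemma ip_decide_eq (θ : Fin p → ℝ) (i : Fin p) : ip θ (fun j => decide (j = i)) = θ i := by
  simp [ip, bval]

lemma sum_min_mul_abs_le_ip_sign_sub (θ : Fin p → ℝ) (τ : Fin p → ℝ) :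
    ∑ i, min (τ i) (1 - τ i) * |θ i| ≤ ip θ (fun i => decide (0 < θ i)) - θ ⬝ᵥ τ := by
  rw [ip_eq_dotProduct, ← dotProduct_sub]
  exact sum_le_sum fun i _ => min_mul_abs_le_mul_bval_sub (θ i) (τ i)

variable {h : (Fin p → Bool) → ℝ}

lemma sum_pdens_mul_exp_ip_sub (θ θ' : Fin p → ℝ) :
    ∑ x, pdens h θ x * Real.exp (ip (θ' - θ) x) = Zfun h θ' / Zfun h θ := by
  rw [Zfun, sum_div]
  refine sum_congr rfl fun x _ => ?_
  rw [pdens, ip_sub, Real.exp_sub]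
  field_simp [(Real.exp_pos (ip θ x)).ne']

lemma meanMap_dotProduct (θ v : Fin p → ℝ) : meanMap h θ ⬝ᵥ v = ∑ x, pdens h θ x * ip v x := by
  simp only [dotProduct, meanMap, ip, sum_mul, mul_sum]
  rw [sum_comm]
  exact sum_congr rfl fun x _ => sum_congr rfl fun i _ => by ring

variable (hpos : ∀ x, 0 < h x)
include hpos

lemma Zfun_pos (θ : Fin p → ℝ) : 0 < Zfun h θ :=
  sum_pos (fun x _ => mul_pos (hpos x) (Real.exp_pos _)) univ_nonempty

lemma pdens_pos (θ : Fin p → ℝ) (x : Fin p → Bool) : 0 < pdens h θ x :=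
  div_pos (mul_pos (hpos x) (Real.exp_pos _)) (Zfun_pos hpos θ)

lemma sum_pdens (θ : Fin p → ℝ) : ∑ x, pdens h θ x = 1 := by
  simp only [pdens, ← sum_div]
  exact div_self (Zfun_pos hpos θ).ne'

lemma log_add_ip_le_Afun (θ : Fin p → ℝ) (x : Fin p → Bool) :
    Real.log (h x) + ip θ x ≤ Afun h θ := by
  rw [← Real.log_exp (ip θ x), ← Real.log_mul (hpos x).ne' (Real.exp_pos _).ne']
  exact Real.log_le_log (mul_pos (hpos x) (Real.exp_pos _)) <|
    single_le_sum (f := fun x => h x * Real.exp (ip θ x))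
      (fun y _ => (mul_pos (hpos y) (Real.exp_pos _)).le) (mem_univ x)

lemma Afun_sub_Afun (θ θ' : Fin p → ℝ) :
    Afun h θ' - Afun h θ = Real.log (∑ x, pdens h θ x * Real.exp (ip (θ' - θ) x)) := by
  rw [sum_pdens_mul_exp_ip_sub, Real.log_div (Zfun_pos hpos θ').ne' (Zfun_pos hpos θ).ne',
    Afun, Afun]

lemma sum_bval_mul_pdens_pos (θ : Fin p → ℝ) (f : (Fin p → Bool) → Bool) (hf : ∃ x, f x = true) :
    0 < ∑ x, bval (f x) * pdens h θ x := by
  obtain ⟨x, hx⟩ := hf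
  refine sum_pos' (fun y _ => mul_nonneg ?_ (pdens_pos hpos θ y).le) ⟨x, mem_univ x, ?_⟩
  · cases f y <;> simp [bval]
  · simpa [hx, bval] using pdens_pos hpos θ x

lemma meanMap_mem_Ioo (θ : Fin p → ℝ) (i : Fin p) : meanMap h θ i ∈ Set.Ioo 0 1 := by
  have hcompl : 1 - meanMap h θ i = ∑ x, bval (!x i) * pdens h θ x := by
    rw [← sum_pdens hpos θ, meanMap, ← sum_sub_distrib]
    refine sum_congr rfl fun x _ => ?_
    cases x i <;> simp [bval]
  constructor
  · exact sum_bval_mul_pdens_pos hpos θ (· i) ⟨fun _ => true, rfl⟩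
  · linarith [sum_bval_mul_pdens_pos hpos θ (fun x => !x i) ⟨fun _ => false, rfl⟩]

lemma dotProduct_meanMap_sub_lt_Afun_sub {θ θ' : Fin p → ℝ} (hne : θ ≠ θ') :
    meanMap h θ ⬝ᵥ (θ' - θ) < Afun h θ' - Afun h θ := by
  obtain ⟨i, hi⟩ := Function.ne_iff.1 (sub_ne_zero.2 hne.symm)
  rw [meanMap_dotProduct, Afun_sub_Afun hpos, Real.lt_log_iff_exp_lt
    (sum_pos (fun x _ => mul_pos (pdens_pos hpos θ x) (Real.exp_pos _)) univ_nonempty)]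
  refine strictConvexOn_exp.map_sum_lt (fun x _ => pdens_pos hpos θ x) (sum_pdens hpos θ)
    (fun _ _ => Set.mem_univ _)
    ⟨fun j => decide (j = i), mem_univ _, fun _ => false, mem_univ _, ?_⟩
  simpa [ip_decide_eq, ip_false] using hi

lemma meanMap_injective_s5 : Function.Injective (meanMap h) := by
  intro θ θ' heq
  by_contra hne
  have h₁ := dotProduct_meanMap_sub_lt_Afun_sub hpos hne
  have h₂ := dotProduct_meanMap_sub_lt_Afun_sub hpos (Ne.symm hne)
  rw [heq, ← neg_sub, dotProduct_neg] at h₁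
  linarith

lemma Afun_add_smul_single (θ : Fin p → ℝ) (i : Fin p) (t : ℝ) :
    Afun h (θ + t • Pi.single i 1) =
      Afun h θ + Real.log (1 + meanMap h θ i * (Real.exp t - 1)) := by
  rw [← sub_eq_iff_eq_add', Afun_sub_Afun hpos, add_sub_cancel_left]
  simp only [ip_smul_single, exp_mul_bval, mul_add, mul_one, sum_add_distrib, sum_pdens hpos,
    meanMap, sum_mul]
  exact congrArg _ (congrArg _ (sum_congr rfl fun x _ => by ring))

lemma continuous_Afun : Continuous (Afun h) := by
  refine Continuous.log ?_ fun θ => (Zfun_pos hpos θ).ne'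
  unfold Zfun ip
  fun_prop

lemma tendsto_Afun_sub_dotProduct_cocompact {τ : Fin p → ℝ} (hτ : ∀ i, τ i ∈ Set.Ioo 0 1) :
    Tendsto (fun θ => Afun h θ - θ ⬝ᵥ τ) (cocompact _) atTop := by
  obtain ⟨x₀, hx₀⟩ := Finite.exists_min fun x => Real.log (h x)
  have hlower : ∀ θ, Real.log (h x₀) + ∑ i, min (τ i) (1 - τ i) * |θ i| ≤ Afun h θ - θ ⬝ᵥ τ := by
    intro θ
    have := log_add_ip_le_Afun hpos θ fun i => decide (0 < θ i)
    linarith [hx₀ fun i => decide (0 < θ i), sum_min_mul_abs_le_ip_sign_sub θ τ]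
  rw [← coprodᵢ_cocompact, Filter.coprodᵢ, tendsto_iSup]
  intro j
  have hc : ∀ i, 0 < min (τ i) (1 - τ i) := fun i => lt_min (hτ i).1 (by linarith [(hτ i).2])
  refine tendsto_atTop_mono (fun θ => ?_) <| tendsto_atTop_add_const_left _ (Real.log (h x₀)) <|
    ((tendsto_norm_cocompact_atTop.comp tendsto_comap).const_mul_atTop (hc j))
  have := single_le_sum (fun i _ => mul_nonneg (hc i).le (abs_nonneg (θ i))) (mem_univ j)
  simp only [Function.comp_apply, Function.eval, Real.norm_eq_abs]
  linarith [hlower θ]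

lemma exists_meanMap_eq {τ : Fin p → ℝ} (hτ : ∀ i, τ i ∈ Set.Ioo 0 1) :
    ∃ θ, meanMap h θ = τ := by
  obtain ⟨θ, hθ⟩ := ((continuous_Afun hpos).sub (by fun_prop)).exists_forall_le
    (tendsto_Afun_sub_dotProduct_cocompact hpos hτ)
  refine ⟨θ, funext fun i => eq_of_forall_mul_le_log_one_add _ _ fun t => ?_⟩
  have := hθ (θ + t • Pi.single i 1)
  simp only [Pi.sub_apply] at this
  rw [Afun_add_smul_single hpos, add_dotProduct, smul_dotProduct, single_dotProduct] at this
  simp only [one_mul, smul_eq_mul] at this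
  linarith

end

theorem meanMap_bijective_onto_cube_general {p : ℕ}
    (h : (Fin p → Bool) → ℝ) (hpos : ∀ x, 0 < h x) :
    (∀ θ : Fin p → ℝ, ∀ i, meanMap h θ i ∈ Set.Ioo (0 : ℝ) 1) ∧
    (∀ τ : Fin p → ℝ, (∀ i, τ i ∈ Set.Ioo (0 : ℝ) 1) →
      ∃! θ : Fin p → ℝ, meanMap h θ = τ) := by
  refine ⟨meanMap_mem_Ioo hpos, fun τ hτ => ?_⟩
  obtain ⟨θ, hθ⟩ := exists_meanMap_eq hpos hτ
  exact ⟨θ, hθ, fun θ' hθ' => meanMap_injective_s5 hpos (hθ'.trans hθ.symm)⟩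

/-- The mean map `τ_*` is a bijection from `ℝ^p` onto the open cube `(0,1)^p`:
its values lie in `(0,1)^p`, and every `τ ∈ (0,1)^p` has a unique preimage. -/
theorem meanMap_bijective_onto_cube {p : ℕ} (hp : 1 ≤ p)
    (h : (Fin p → Bool) → ℝ) (hpos : ∀ x, 0 < h x) :
    (∀ θ : Fin p → ℝ, ∀ i, meanMap h θ i ∈ Set.Ioo (0 : ℝ) 1) ∧
    (∀ τ : Fin p → ℝ, (∀ i, τ i ∈ Set.Ioo (0 : ℝ) 1) →
      ∃! θ : Fin p → ℝ, meanMap h θ = τ) :=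
  meanMap_bijective_onto_cube_general h hpos
end
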